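/- In the abstract setting (X a σ-finite measure space, A self-adjoint on L²(X), 2<q<∞ fixed, resolvents consistently extended to L^{q′}(X)→L²(X) and L^{q′}(X)→L^q(X)): there is an absolute constant C such that for all 0<ε≤λ, ‖Π_{[λ,λ+ε]}‖_{L^{q′}→L²} ≤ C ελ ‖Π_{[0,2λ]} Im((A²−(λ+iε)²)^{-1})‖_{L^{q′}→L²} and ‖Π_{[λ,λ+ε]}‖²_{L^{q′}→L²} ≤ C ελ ‖Π_{[0,2λ]} Im((A²−(λ+iε)²)^{-1})‖_{L^{q′}→L^q}. -/

import Mathlib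

/-!
On the spectral side, `Π_{[0,2λ]} Im((A² − (λ+iε)²)⁻¹)` is `w(A)` for the weight
`w(t) = 1_{[0,2λ]}(t) · 2ελ / ((t² − λ² + ε²)² + (2ελ)²) ≥ 0`, and `1 ≤ 10ελ w` on `[λ, λ+ε]`
when `0 < ε ≤ λ`. Hence `Π_{[λ,λ+ε]} = h(A) w(A)` with `‖h‖_∞ ≤ 10ελ`, which gives the first
bound, and `‖Π_{[λ,λ+ε]} f‖₂² = ⟨f, Π_{[λ,λ+ε]} f⟩ ≤ 10ελ ⟨f, w(A) f⟩ ≤ 10ελ ‖f‖_{q'} ‖w(A) f‖_q`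
by positivity of the functional calculus and Hölder, which gives the second.
-/

open MeasureTheory Complex Set

noncomputable section

/-- The Japanese bracket `⟨x⟩ = 2 + |x|`. -/
def jb (x : ℝ) : ℝ := 2 + |x|

/-- The Hölder conjugate exponent `q' = q/(q-1)`. -/
def conjExp (q : ℝ) : ℝ := q / (q - 1)

/-- `σ(q) = min( n(1/2−1/q)−1/2 , ((n−1)/2)(1/2−1/q) )`. -/
def sigmaExp (n : ℕ) (q : ℝ) : ℝ :=
  min ((n : ℝ) * (1 / 2 - 1 / q) - 1 / 2) (((n : ℝ) - 1) / 2 * (1 / 2 - 1 / q))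

/-- The admissible range of exponents: `2 ≤ q ≤ 2n/(n−2)` if `n ≥ 3`, `2 ≤ q < ∞` if `n = 2`. -/
def qRange (n : ℕ) (q : ℝ) : Prop :=
  2 ≤ q ∧ (3 ≤ n → q ≤ 2 * n / ((n : ℝ) - 2))

variable {X : Type*} [MeasurableSpace X]

/-- `OpNormLE μ T p r C` : the operator `T`, defined on `L²(μ)`, satisfies
`‖T f‖_{L^r} ≤ C ‖f‖_{L^p}` for every `f ∈ L²(μ)`; equivalently (by density), `T`
extends from `L² ∩ L^p` to a bounded operator `L^p(μ) → L^r(μ)` of norm at most `C`. -/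
def OpNormLE (μ : Measure X) (T : Lp ℂ 2 μ →L[ℂ] Lp ℂ 2 μ) (p r C : ℝ) : Prop :=
  ∀ f : Lp ℂ 2 μ,
    eLpNorm (⇑(T f)) (ENNReal.ofReal r) μ ≤
      ENNReal.ofReal C * eLpNorm (⇑f) (ENNReal.ofReal p) μ

/-- An abstract Borel functional calculus on `L²(μ)`, i.e. the assignment `m ↦ m(A)`
given by the spectral theorem for a self-adjoint operator `A` on `L²(μ)`. -/
structure BorelFC (μ : Measure X) where
  fc : (ℝ → ℂ) → (Lp ℂ 2 μ →L[ℂ] Lp ℂ 2 μ)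
  fc_add : ∀ m₁ m₂ : ℝ → ℂ, fc (fun t => m₁ t + m₂ t) = fc m₁ + fc m₂
  fc_smul : ∀ (c : ℂ) (m : ℝ → ℂ), fc (fun t => c * m t) = c • fc m
  fc_mul : ∀ m₁ m₂ : ℝ → ℂ, fc (fun t => m₁ t * m₂ t) = (fc m₁).comp (fc m₂)
  fc_one : fc (fun _ => 1) = ContinuousLinearMap.id ℂ (Lp ℂ 2 μ)
  fc_norm_le : ∀ (m : ℝ → ℂ) (C : ℝ), (∀ t, ‖m t‖ ≤ C) → ‖fc m‖ ≤ C
  fc_star : ∀ m : ℝ → ℂ,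
    fc (fun t => (starRingEnd ℂ) (m t)) = ContinuousLinearMap.adjoint (fc m)

namespace BorelFC

variable {μ : Measure X} (F : BorelFC μ)

/-- The spectral projection `Π_{[a,b]} = 1_{[a,b]}(A)`. -/
def proj (a b : ℝ) : Lp ℂ 2 μ →L[ℂ] Lp ℂ 2 μ :=
  F.fc (Set.indicator (Set.Icc a b) fun _ => (1 : ℂ))

/-- The resolvent `(A² − z)⁻¹` of `A²`, via the functional calculus of `A`. -/
def res2 (z : ℂ) : Lp ℂ 2 μ →L[ℂ] Lp ℂ 2 μ :=
  F.fc fun t => (((t : ℂ)) ^ 2 - z)⁻¹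

/-- If `F` is the functional calculus of `A = √(−Δ_g)`, this is the resolvent
`(Δ_g + z)⁻¹ = (z − A²)⁻¹`. -/
def resLap (z : ℂ) : Lp ℂ 2 μ →L[ℂ] Lp ℂ 2 μ :=
  F.fc fun t => (z - ((t : ℂ)) ^ 2)⁻¹

end BorelFC

/-- The imaginary part `Im T = (T − T^*)/(2i)` of an operator on `L²(μ)`. -/
def imOp {μ : Measure X} (T : Lp ℂ 2 μ →L[ℂ] Lp ℂ 2 μ) : Lp ℂ 2 μ →L[ℂ] Lp ℂ 2 μ :=
  ((2 * Complex.I)⁻¹) • (T - ContinuousLinearMap.adjoint T)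

/-- The resolvents `(A−z)⁻¹`, `z ∈ ℂ∖ℝ`, of the self-adjoint operator `A` underlying the
functional calculus `F` admit consistent bounded extensions `L^{q′} → L²` and
`L^{q′} → L^q`. -/
def ResolventExtends {μ : Measure X} (F : BorelFC μ) (q : ℝ) : Prop :=
  ∀ z : ℂ, z.im ≠ 0 →
    (∃ C : ℝ, OpNormLE μ (F.fc fun t => ((t : ℂ) - z)⁻¹) (conjExp q) 2 C) ∧
    (∃ C : ℝ, OpNormLE μ (F.fc fun t => ((t : ℂ) - z)⁻¹) (conjExp q) q C)

open ContinuousLinearMap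
open scoped InnerProductSpace

section Lp

variable {μ : Measure X}

lemma eLpNorm_ofReal_two_eq (u : Lp ℂ 2 μ) :
    eLpNorm u (ENNReal.ofReal 2) μ = ENNReal.ofReal ‖u‖ := by
  rw [ENNReal.ofReal_ofNat, Lp.norm_def, ENNReal.ofReal_toReal (Lp.eLpNorm_ne_top u)]

lemma ofReal_re_inner_le_eLpNorm_mul_eLpNorm {p q : ℝ} (hpq : p.HolderConjugate q)
    (f u : Lp ℂ 2 μ) :
    ENNReal.ofReal (⟪f, u⟫_ℂ).re ≤
      eLpNorm f (ENNReal.ofReal p) μ * eLpNorm u (ENNReal.ofReal q) μ := by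
  have := hpq.ennrealOfReal
  calc ENNReal.ofReal (⟪f, u⟫_ℂ).re ≤ ‖⟪f, u⟫_ℂ‖ₑ := by
        rw [← ofReal_norm]
        exact ENNReal.ofReal_le_ofReal (Complex.re_le_norm _)
    _ ≤ ∫⁻ a, ‖⟪f a, u a⟫_ℂ‖ₑ ∂μ := by
        rw [L2.inner_def]
        exact enorm_integral_le_lintegral_enorm _
    _ = eLpNorm (fun a => ⟪f a, u a⟫_ℂ) 1 μ := eLpNorm_one_eq_lintegral_enorm.symm
    _ ≤ (1 : NNReal) * eLpNorm f (ENNReal.ofReal p) μ * eLpNorm u (ENNReal.ofReal q) μ :=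
        eLpNorm_le_eLpNorm_mul_eLpNorm'_of_norm (Lp.aestronglyMeasurable f)
          (Lp.aestronglyMeasurable u) _ 1
          (ae_of_all _ fun a => by simpa using norm_inner_le_norm (𝕜 := ℂ) (f a) (u a))
    _ = _ := by simp

namespace OpNormLE

variable {S T : Lp ℂ 2 μ →L[ℂ] Lp ℂ 2 μ} {p q c D : ℝ}

lemma comp_left (hc : 0 ≤ c) (hS : ‖S‖ ≤ c) (hT : OpNormLE μ T p 2 D) :
    OpNormLE μ (S.comp T) p 2 (c * D) := by
  intro f
  rw [eLpNorm_ofReal_two_eq, ENNReal.ofReal_mul hc, mul_assoc]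
  calc ENNReal.ofReal ‖S (T f)‖ ≤ ENNReal.ofReal c * ENNReal.ofReal ‖T f‖ := by
        rw [← ENNReal.ofReal_mul hc]
        exact ENNReal.ofReal_le_ofReal (S.le_of_opNorm_le hS _)
    _ ≤ _ := by
        gcongr
        rw [← eLpNorm_ofReal_two_eq]
        exact hT f

lemma of_sq_le_re_inner (hpq : p.HolderConjugate q) (hc : 0 ≤ c) (hD : 0 ≤ D)
    (hST : ∀ f, ‖S f‖ ^ 2 ≤ c * (⟪f, T f⟫_ℂ).re) (hT : OpNormLE μ T p q D) :
    OpNormLE μ S p 2 √(c * D) := by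
  intro f
  set N := eLpNorm f (ENNReal.ofReal p) μ
  rw [eLpNorm_ofReal_two_eq, ← ENNReal.pow_le_pow_left_iff two_ne_zero]
  calc ENNReal.ofReal ‖S f‖ ^ 2 = ENNReal.ofReal (‖S f‖ ^ 2) :=
        (ENNReal.ofReal_pow (norm_nonneg _) 2).symm
    _ ≤ ENNReal.ofReal c * ENNReal.ofReal (⟪f, T f⟫_ℂ).re := by
        rw [← ENNReal.ofReal_mul hc]
        exact ENNReal.ofReal_le_ofReal (hST f)
    _ ≤ ENNReal.ofReal c * (N * (ENNReal.ofReal D * N)) := by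
        gcongr
        exact (ofReal_re_inner_le_eLpNorm_mul_eLpNorm hpq f (T f)).trans (by gcongr; exact hT f)
    _ = (ENNReal.ofReal √(c * D) * N) ^ 2 := by
        rw [mul_pow, ← ENNReal.ofReal_pow (Real.sqrt_nonneg _), Real.sq_sqrt (mul_nonneg hc hD),
          ENNReal.ofReal_mul hc]
        ring

end OpNormLE

end Lp

namespace BorelFC

variable {μ : Measure X} (F : BorelFC μ)

lemma fc_sub (m₁ m₂ : ℝ → ℂ) : F.fc (fun t => m₁ t - m₂ t) = F.fc m₁ - F.fc m₂ := by
  have : (fun t => m₁ t - m₂ t) = fun t => m₁ t + (-1) * m₂ t := by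
    funext t
    ring
  rw [this, F.fc_add, F.fc_smul, neg_one_smul, sub_eq_add_neg]

lemma imOp_fc (m : ℝ → ℂ) : imOp (F.fc m) = F.fc fun t => ((m t).im : ℂ) := by
  rw [imOp, ← F.fc_star, ← fc_sub, ← F.fc_smul]
  congr 1
  funext t
  rw [Complex.sub_conj]
  push_cast
  field_simp

lemma proj_comp_fc (a b : ℝ) (m : ℝ → ℂ) :
    (F.proj a b).comp (F.fc m) = F.fc ((Icc a b).indicator m) := by
  rw [proj, ← F.fc_mul]
  congr 1
  funext t
  by_cases ht : t ∈ Icc a b <;> simp [ht]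

lemma norm_fc_apply_sq (m : ℝ → ℂ) (f : Lp ℂ 2 μ) :
    ‖F.fc m f‖ ^ 2 = (⟪f, F.fc (fun t => ((‖m t‖ ^ 2 : ℝ) : ℂ)) f⟫_ℂ).re := by
  have hstar : F.fc (fun t => ((‖m t‖ ^ 2 : ℝ) : ℂ)) = adjoint (F.fc m) ∘L F.fc m := by
    rw [← F.fc_star, ← F.fc_mul]
    congr 1
    funext t
    rw [Complex.conj_mul', Complex.ofReal_pow]
  rw [hstar, comp_apply, adjoint_inner_right]
  exact (inner_self_eq_norm_sq (𝕜 := ℂ) _).symm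

lemma re_inner_fc_nonneg {m : ℝ → ℝ} (hm : 0 ≤ m) (f : Lp ℂ 2 μ) :
    0 ≤ (⟪f, F.fc (fun t => (m t : ℂ)) f⟫_ℂ).re := by
  have hsq : (fun t => (m t : ℂ)) = fun t => ((‖(√(m t) : ℂ)‖ ^ 2 : ℝ) : ℂ) := by
    funext t
    simp [Real.sq_sqrt (hm t)]
  rw [hsq, ← norm_fc_apply_sq]
  positivity

lemma re_inner_fc_mono {m₁ m₂ : ℝ → ℝ} (h : m₁ ≤ m₂) (f : Lp ℂ 2 μ) :
    (⟪f, F.fc (fun t => (m₁ t : ℂ)) f⟫_ℂ).re ≤ (⟪f, F.fc (fun t => (m₂ t : ℂ)) f⟫_ℂ).re := by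
  have := F.re_inner_fc_nonneg (sub_nonneg.2 h) f
  simp only [Pi.sub_apply, Complex.ofReal_sub, F.fc_sub, sub_apply, inner_sub_right,
    Complex.sub_re] at this
  linarith

variable {a b c : ℝ} {w : ℝ → ℝ}

lemma opNormLE_proj_of_one_le_mul (hc : 0 ≤ c) (hw : ∀ t ∈ Icc a b, 1 ≤ c * w t) {p D : ℝ}
    (hT : OpNormLE μ (F.fc fun t => (w t : ℂ)) p 2 D) :
    OpNormLE μ (F.proj a b) p 2 (c * D) := by
  have hwpos : ∀ t ∈ Icc a b, 0 < w t := fun t ht =>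
    pos_of_mul_pos_right (one_pos.trans_le (hw t ht)) hc
  set h : ℝ → ℂ := (Icc a b).indicator fun t => ((w t)⁻¹ : ℂ)
  have hfactor : F.proj a b = (F.fc h).comp (F.fc fun t => (w t : ℂ)) := by
    rw [proj, ← F.fc_mul]
    congr 1
    funext t
    by_cases ht : t ∈ Icc a b
    · simp [h, ht, (hwpos t ht).ne']
    · simp [h, ht]
  have hnorm : ‖F.fc h‖ ≤ c := F.fc_norm_le _ _ fun t => by
    by_cases ht : t ∈ Icc a b
    · simpa [h, ht, abs_of_pos (hwpos t ht), inv_le_iff_one_le_mul₀ (hwpos t ht), mul_comm]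
        using hw t ht
    · simpa [h, ht] using hc
  rw [hfactor]
  exact hT.comp_left hc hnorm

lemma opNormLE_proj_of_one_le_mul_of_holderConjugate (hc : 0 ≤ c) (hw₀ : 0 ≤ w)
    (hw : ∀ t ∈ Icc a b, 1 ≤ c * w t) {p q D : ℝ} (hpq : p.HolderConjugate q) (hD : 0 ≤ D)
    (hT : OpNormLE μ (F.fc fun t => (w t : ℂ)) p q D) :
    OpNormLE μ (F.proj a b) p 2 √(c * D) := by
  refine OpNormLE.of_sq_le_re_inner hpq hc hD (fun f => ?_) hT
  have hind : (fun t => ‖(Icc a b).indicator (fun _ => (1 : ℂ)) t‖ ^ 2) ≤ fun t => c * w t := by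
    intro t
    by_cases ht : t ∈ Icc a b
    · simpa [ht] using hw t ht
    · simpa [ht] using mul_nonneg hc (hw₀ t)
  calc ‖F.proj a b f‖ ^ 2
      = (⟪f, F.fc (fun t => ((‖(Icc a b).indicator (fun _ => (1 : ℂ)) t‖ ^ 2 : ℝ) : ℂ)) f⟫_ℂ).re :=
        F.norm_fc_apply_sq _ f
    _ ≤ (⟪f, F.fc (fun t => ((c * w t : ℝ) : ℂ)) f⟫_ℂ).re := F.re_inner_fc_mono hind f
    _ = c * (⟪f, F.fc (fun t => (w t : ℂ)) f⟫_ℂ).re := by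
        simp only [Complex.ofReal_mul, F.fc_smul, smul_apply, inner_smul_right,
          Complex.re_ofReal_mul]

end BorelFC

lemma im_inv_sq_sub_sq (t lam ε : ℝ) :
    (((t : ℂ) ^ 2 - ((lam : ℂ) + ε * I) ^ 2)⁻¹).im =
      2 * ε * lam / ((t ^ 2 - lam ^ 2 + ε ^ 2) ^ 2 + (2 * ε * lam) ^ 2) := by
  rw [Complex.inv_im, Complex.normSq_apply]
  simp only [sub_re, sub_im, pow_two, mul_re, mul_im, add_re, add_im, ofReal_re, ofReal_im,
    I_re, I_im]
  ring

lemma im_inv_sq_sub_sq_nonneg (t : ℝ) {lam ε : ℝ} (hε : 0 ≤ ε) (hlam : 0 ≤ lam) :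
    0 ≤ (((t : ℂ) ^ 2 - ((lam : ℂ) + ε * I) ^ 2)⁻¹).im := by
  rw [im_inv_sq_sub_sq]
  positivity

lemma one_le_mul_im_inv_sq_sub_sq {t lam ε : ℝ} (hε : 0 < ε) (hεlam : ε ≤ lam)
    (ht : t ∈ Icc lam (lam + ε)) :
    1 ≤ 10 * ε * lam * (((t : ℂ) ^ 2 - ((lam : ℂ) + ε * I) ^ 2)⁻¹).im := by
  obtain ⟨ht₁, ht₂⟩ := ht
  have hlam : 0 < lam := hε.trans_le hεlam
  have h₀ : 0 ≤ t ^ 2 - lam ^ 2 + ε ^ 2 := by nlinarith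
  have h₁ : t ^ 2 - lam ^ 2 + ε ^ 2 ≤ 4 * ε * lam := by nlinarith
  rw [im_inv_sq_sub_sq, ← mul_div_assoc, le_div_iff₀ (by positivity)]
  nlinarith

/-- **Resolvent bounds imply spectral cluster bounds** ((3.4) and (3.6) of the paper).
There is an absolute constant `C` such that, in any abstract setting — `Y` a σ-finite
measure space, `A` self-adjoint on `L²(Y)` with Borel functional calculus `F`,
`2 < q < ∞`, resolvents consistently extended `L^{q′} → L²` and `L^{q′} → L^q` — and
for all `0 < ε ≤ λ`:
`‖Π_{[λ,λ+ε]}‖_{L^{q′}→L²} ≤ Cελ‖Π_{[0,2λ]} Im((A²−(λ+iε)²)⁻¹)‖_{L^{q′}→L²}` and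
`‖Π_{[λ,λ+ε]}‖²_{L^{q′}→L²} ≤ Cελ‖Π_{[0,2λ]} Im((A²−(λ+iε)²)⁻¹)‖_{L^{q′}→L^q}`
(the right-hand norms being expressed through arbitrary admissible bounds `D`). -/
theorem resolvent_to_cluster_abstract :
    ∃ C : ℝ, 0 < C ∧
      ∀ (Y : Type) [MeasurableSpace Y] (ν : Measure Y) [SigmaFinite ν]
        (F : BorelFC ν) (q : ℝ), 2 < q → ResolventExtends F q →
        ∀ ε lam : ℝ, 0 < ε → ε ≤ lam →
          (∀ D : ℝ, 0 ≤ D →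
            OpNormLE ν ((F.proj 0 (2 * lam)).comp
                (imOp (F.res2 (((lam : ℂ) + (ε : ℂ) * Complex.I) ^ 2))))
              (conjExp q) 2 D →
            OpNormLE ν (F.proj lam (lam + ε)) (conjExp q) 2 (C * ε * lam * D)) ∧
          (∀ D : ℝ, 0 ≤ D →
            OpNormLE ν ((F.proj 0 (2 * lam)).comp
                (imOp (F.res2 (((lam : ℂ) + (ε : ℂ) * Complex.I) ^ 2))))
              (conjExp q) q D →
            OpNormLE ν (F.proj lam (lam + ε)) (conjExp q) 2
              (Real.sqrt (C * ε * lam * D))) := by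
  refine ⟨10, by norm_num, fun Y _ ν _ F q hq _ ε lam hε hεlam => ?_⟩
  have hlam : 0 < lam := hε.trans_le hεlam
  set w : ℝ → ℝ := (Icc 0 (2 * lam)).indicator
    fun t => (((t : ℂ) ^ 2 - ((lam : ℂ) + ε * I) ^ 2)⁻¹).im
  have hT : (F.proj 0 (2 * lam)).comp (imOp (F.res2 (((lam : ℂ) + (ε : ℂ) * Complex.I) ^ 2))) =
      F.fc fun t => (w t : ℂ) := by
    rw [BorelFC.res2, F.imOp_fc, F.proj_comp_fc]
    congr 1
    funext t
    by_cases ht : t ∈ Icc 0 (2 * lam) <;> simp [w, ht]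
  have hw₀ : 0 ≤ w := indicator_nonneg fun t _ => im_inv_sq_sub_sq_nonneg t hε.le hlam.le
  have hw : ∀ t ∈ Icc lam (lam + ε), 1 ≤ 10 * ε * lam * w t := fun t ht => by
    have ht' : t ∈ Icc 0 (2 * lam) := ⟨by linarith [ht.1], by linarith [ht.2]⟩
    simpa only [w, indicator_of_mem ht'] using one_le_mul_im_inv_sq_sub_sq hε hεlam ht
  have hc : 0 ≤ 10 * ε * lam := by positivity
  have hqq' : (conjExp q).HolderConjugate q :=
    (Real.HolderConjugate.conjExponent (by linarith)).symm
  rw [hT]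
  exact ⟨fun D _ hD => F.opNormLE_proj_of_one_le_mul hc hw hD,
    fun D hD hDq => F.opNormLE_proj_of_one_le_mul_of_holderConjugate hc hw₀ hw hqq' hD hDq⟩

end
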